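/- arXiv:1104.5452 — 2 statements merged into one kernel-verified Lean document; each statement's English description precedes it below -/
import Mathlib

section
/- Let λ ∈ [1/2, 1). Then there is no F_λ-invariant Borel probability measure on (0,1] that is absolutely continuous with respect to Lebesgue measure. -/
/-!
Pushing Lebesgue measure forward along `F_λ` is a Markov chain on branch indices. Each branch
maps `W i` affinely onto `⋃_{m ≥ max (i - 1) 1} W m`, so `Leb (F_λ^{-k} (W n))` is the law at
time `k` of `X_{k+1} = max (X_k - 1) 1 + G`, `X_0 = 1 + G`, where `P (G = j) = (1 - λ) λ^j`.

The increment `G - 1` has mean `(2λ - 1)/(1 - λ) ≥ 0`, so the chain does not keep returning to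
`1`. For `λ > 1/2` the weight `(2λ)^{-X}` contracts by the factor `4λ(1 - λ) < 1` at every step.
For `λ = 1/2` the first moment of `X_k` grows by `P (X_k = 1)` per step while the second moment
grows only linearly, so `P (X_k = 1)` is small on average. Since
`P (X_{k+1} = n) ≥ (1 - λ) P (X_k = n + 1)`, every `Leb (F_λ^{-k} (W n))` becomes arbitrarily
small. For an invariant `μ ≪ Leb` this forces `μ (W n) = μ (F_λ^{-k} (W n))` to vanish, hence
`μ (0,1] = 0`.
-/

open MeasureTheory Set Filter Topology

/-- The Markov partition interval `W n = (lam^n, lam^(n-1)]` for `n ≥ 1`. -/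
noncomputable def Wint (lam : ℝ) (n : ℕ) : Set ℝ := Set.Ioc (lam ^ n) (lam ^ (n - 1))

/-- The map `F_lam : (0,1] → (0,1]`, extended by the identity outside `(0,1]`.
On `W n` it is `x ↦ (x - lam^n)/(lam(1-lam))` for `n ≥ 2` and
`x ↦ (x - lam)/(1-lam)` on `W 1`; for `x ∈ (0,1]` the branch index is
the least `n` with `lam^n < x`. -/
noncomputable def Flam (lam : ℝ) (x : ℝ) : ℝ :=
  if 0 < x ∧ x ≤ 1 then
    if sInf {n : ℕ | lam ^ n < x} = 1 then (x - lam) / (1 - lam)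
    else (x - lam ^ sInf {n : ℕ | lam ^ n < x}) / (lam * (1 - lam))
  else x

/-- The slope of `F_lam` on the branch `W n`. -/
noncomputable def slopeW (lam : ℝ) (n : ℕ) : ℝ :=
  if n = 1 then 1 / (1 - lam) else 1 / (lam * (1 - lam))

/-- A Borel measure `m` on `(0,1]` is `(t,p)`-conformal for `F_lam` if for every
branch `W n` and every Borel `A ⊆ W n` one has `m(F_lam(A)) = e^p * s_n^t * m(A)`. -/
def IsConformal (lam t p : ℝ) (m : Measure ℝ) : Prop :=
  ∀ n : ℕ, 1 ≤ n → ∀ A : Set ℝ, MeasurableSet A → A ⊆ Wint lam n →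
    m (Flam lam '' A) = ENNReal.ofReal (Real.exp p * slopeW lam n ^ t) * m A

/-- A set is wandering for `F_lam` if its preimages under all iterates are
pairwise disjoint. -/
def IsWanderingSet (lam : ℝ) (A : Set ℝ) : Prop :=
  Pairwise fun i j : ℕ => Disjoint ((Flam lam)^[i] ⁻¹' A) ((Flam lam)^[j] ⁻¹' A)

open scoped ENNReal

theorem tsum_ite_le_eq_tsum_add {α : Type*} [AddCommMonoid α] [TopologicalSpace α] (t : ℕ)
    (f : ℕ → α) : ∑' m, (if t ≤ m then f m else 0) = ∑' j, f (t + j) := by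
  rw [← (add_right_injective t).tsum_eq]
  · simp
  · intro m hm
    by_cases htm : t ≤ m
    · exact ⟨m - t, Nat.add_sub_cancel' htm⟩
    · simp [htm] at hm

theorem frequently_lt_of_mul_sum_le {u : ℕ → ℝ≥0∞} {c : ℝ≥0∞} (hc : c ≠ ⊤)
    (h : ∀ T K : ℕ, (T : ℝ≥0∞) * ∑ k ∈ Finset.range K, u k ≤ T ^ 2 + c * (K + 1))
    {δ : ℝ≥0∞} (hδ : δ ≠ 0) : ∃ᶠ k in atTop, u k < δ := by
  rw [Filter.frequently_atTop]
  intro K₀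
  by_contra! hge
  -- If `d ≤ u k` for `k ≥ K₀`, then `T = N`, `K = K₀ + N ^ 2` give `N ^ 3 d = O(N ^ 2)`.
  obtain ⟨d, hd0, hdδ, hdtop⟩ : ∃ d, d ≠ 0 ∧ d ≤ δ ∧ d ≠ ⊤ :=
    ⟨min δ 1, by simp [hδ], min_le_left _ _,
      ((min_le_right _ _).trans_lt ENNReal.one_lt_top).ne⟩
  lift d to NNReal using hdtop
  lift c to NNReal using hc
  have hdpos : (0 : ℝ) < d := by simpa [pos_iff_ne_zero] using hd0
  set a : ℝ := 1 + 2 * c + c * K₀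
  obtain ⟨N, hN⟩ := exists_nat_gt (a / d + 1)
  have hN1 : (1 : ℝ) ≤ N ^ 2 := by
    nlinarith [div_nonneg (by positivity : (0 : ℝ) ≤ a) hdpos.le]
  have hNd : a < N * d := by
    rw [div_add_one hdpos.ne', div_lt_iff₀ hdpos] at hN
    nlinarith
  have hlow : ((N ^ 2 : ℕ) : ℝ≥0∞) * d ≤ ∑ k ∈ Finset.range (K₀ + N ^ 2), u k := by
    calc ((N ^ 2 : ℕ) : ℝ≥0∞) * d
        = (Finset.Ico K₀ (K₀ + N ^ 2)).card • (d : ℝ≥0∞) := by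
          simp [nsmul_eq_mul]
      _ ≤ ∑ k ∈ Finset.Ico K₀ (K₀ + N ^ 2), u k :=
          Finset.card_nsmul_le_sum _ _ _ fun k hk => hdδ.trans (hge k (Finset.mem_Ico.1 hk).1)
      _ ≤ _ := Finset.sum_le_sum_of_subset fun k hk => by simp at hk ⊢; omega
  have key := (mul_le_mul_right hlow (N : ℝ≥0∞)).trans (h N (K₀ + N ^ 2))
  have key' : (N : ℝ) * ((N ^ 2 : ℕ) * d) ≤ N ^ 2 + c * ((K₀ + N ^ 2 : ℕ) + 1) := by
    exact_mod_cast key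
  push_cast at key'
  have hc0 : (0 : ℝ) ≤ c := c.2
  nlinarith [mul_lt_mul_of_pos_left hNd (by positivity : (0 : ℝ) < N ^ 2),
    mul_le_mul_of_nonneg_left hN1 hc0,
    mul_le_mul_of_nonneg_left hN1 (by positivity : (0 : ℝ) ≤ c * K₀)]

theorem MeasureTheory.Measure.AbsolutelyContinuous.exists_pos_forall_measure_lt {α : Type*}
    [MeasurableSpace α] {μ ν : Measure α} [IsFiniteMeasure μ] [SigmaFinite ν] (h : μ ≪ ν)
    {ε : ℝ≥0∞} (hε : ε ≠ 0) : ∃ δ > 0, ∀ s, ν s < δ → μ s < ε := by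
  obtain ⟨δ, hδ, hs⟩ := exists_pos_setLIntegral_lt_of_measure_lt
    (Measure.lintegral_rnDeriv_le.trans_lt (measure_lt_top μ univ)).ne hε
  refine ⟨δ, hδ, fun s hνs => ?_⟩
  rw [← Measure.withDensity_rnDeriv_eq μ ν h, withDensity_apply']
  exact hs s hνs

/-- The slope of the inverse branch on `W i`, i.e. `(slopeW lam i)⁻¹`. -/
noncomputable def branchScale (lam : ℝ) (i : ℕ) : ℝ :=
  if i = 1 then 1 - lam else lam * (1 - lam)

noncomputable def invBranch (lam : ℝ) (i : ℕ) (y : ℝ) : ℝ :=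
  lam ^ i + branchScale lam i * y

/-- For `i ≥ 1`, `Flam lam` maps `Wint lam i` onto `⋃ m ≥ minTarget i, Wint lam m`. -/
def minTarget (i : ℕ) : ℕ := max (i - 1) 1

/-- The density on `Wint lam m` of the push-forward of Lebesgue measure by `(Flam lam)^[k]`. -/
noncomputable def iterDensity (lam : ℝ) : ℕ → ℕ → ℝ≥0∞
  | 0, _ => 1
  | k + 1, m => ∑ i ∈ Finset.Icc 1 (m + 1),
      ENNReal.ofReal (branchScale lam i) * iterDensity lam k i

noncomputable def branchMass (lam : ℝ) (k m : ℕ) : ℝ≥0∞ :=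
  volume ((Flam lam)^[k] ⁻¹' Wint lam m)

/-- The law of the jump `G` of the branch-index chain. -/
noncomputable def geomWeight (lam : ℝ) (j : ℕ) : ℝ≥0∞ :=
  ENNReal.ofReal ((1 - lam) * lam ^ j)

section Partition

variable {lam : ℝ}

theorem Wint_zero (lam : ℝ) : Wint lam 0 = ∅ := by simp [Wint]

theorem Wint_subset_Ioc (h0 : 0 ≤ lam) (h1 : lam ≤ 1) (m : ℕ) : Wint lam m ⊆ Ioc 0 1 :=
  fun _ hx => ⟨(pow_nonneg h0 m).trans_lt hx.1, hx.2.trans (pow_le_one₀ h0 h1)⟩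

theorem sInf_eq_succ_iff_mem_Wint (h0 : 0 ≤ lam) (h1 : lam ≤ 1) (m : ℕ) (x : ℝ) :
    sInf {n : ℕ | lam ^ n < x} = m + 1 ↔ x ∈ Wint lam (m + 1) := by
  rw [Nat.sInf_upward_closed_eq_succ_iff (s := {n : ℕ | lam ^ n < x})
    fun k₁ k₂ hk h => (pow_le_pow_of_le_one h0 h1 hk).trans_lt h]
  simp [Wint]

theorem sInf_eq_of_mem_Wint (h0 : 0 ≤ lam) (h1 : lam ≤ 1) {m : ℕ} {x : ℝ}
    (hx : x ∈ Wint lam m) : sInf {n : ℕ | lam ^ n < x} = m := by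
  obtain _ | m := m
  · simp [Wint_zero] at hx
  · exact (sInf_eq_succ_iff_mem_Wint h0 h1 m x).2 hx

theorem pairwise_disjoint_Wint (h0 : 0 ≤ lam) (h1 : lam ≤ 1) :
    Pairwise fun m n => Disjoint (Wint lam m) (Wint lam n) :=
  fun _ _ hmn => Set.disjoint_left.2 fun _ hm hn =>
    hmn ((sInf_eq_of_mem_Wint h0 h1 hm).symm.trans (sInf_eq_of_mem_Wint h0 h1 hn))

theorem iUnion_Wint (h0 : 0 < lam) (h1 : lam < 1) : ⋃ m, Wint lam m = Ioc 0 1 := by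
  refine (iUnion_subset (Wint_subset_Ioc h0.le h1.le)).antisymm fun x hx => ?_
  have hN : sInf {n : ℕ | lam ^ n < x} ≠ 0 := by
    rw [Ne, Nat.sInf_eq_zero, not_or]
    exact ⟨by simpa using hx.2, Set.nonempty_iff_ne_empty.1 (exists_pow_lt_of_lt_one hx.1 h1)⟩
  obtain ⟨m, hm⟩ := Nat.exists_eq_add_one_of_ne_zero hN
  exact mem_iUnion.2 ⟨m + 1, (sInf_eq_succ_iff_mem_Wint h0.le h1.le m x).1 hm⟩

end Partition

section Branches

variable {lam : ℝ}

theorem Flam_of_notMem {x : ℝ} (hx : x ∉ Ioc 0 1) : Flam lam x = x := if_neg hx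

theorem Flam_of_mem_Wint (h0 : 0 ≤ lam) (h1 : lam ≤ 1) {m : ℕ} {x : ℝ}
    (hx : x ∈ Wint lam m) : Flam lam x = (x - lam ^ m) / branchScale lam m := by
  rw [Flam, if_pos (show 0 < x ∧ x ≤ 1 from Wint_subset_Ioc h0 h1 m hx),
    sInf_eq_of_mem_Wint h0 h1 hx, branchScale]
  split_ifs with h <;> simp [h]

theorem measurable_Flam (h0 : 0 ≤ lam) (h1 : lam ≤ 1) : Measurable (Flam lam) := by
  have hN : Measurable fun x : ℝ => sInf {n : ℕ | lam ^ n < x} := by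
    refine measurable_to_countable' fun m => ?_
    obtain _ | m := m
    · have : (fun x : ℝ => sInf {n : ℕ | lam ^ n < x}) ⁻¹' {0} =
          Ioi 1 ∪ ⋂ n : ℕ, Iic (lam ^ n) := by
        ext x
        simp [Nat.sInf_eq_zero, Set.eq_empty_iff_forall_notMem]
      rw [this]
      exact measurableSet_Ioi.union (.iInter fun _ => measurableSet_Iic)
    · have : (fun x : ℝ => sInf {n : ℕ | lam ^ n < x}) ⁻¹' {m + 1} = Wint lam (m + 1) := by
        ext x
        exact sInf_eq_succ_iff_mem_Wint h0 h1 m x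
      rw [this]
      exact measurableSet_Ioc
  refine .ite measurableSet_Ioc (.ite (hN (measurableSet_singleton 1)) ?_ ?_) measurable_id <;>
    fun_prop

theorem branchScale_pos (h0 : 0 < lam) (h1 : lam < 1) (i : ℕ) : 0 < branchScale lam i := by
  unfold branchScale
  split_ifs <;> nlinarith

theorem Flam_mem_Ioc_iff (h0 : 0 < lam) (h1 : lam < 1) {i : ℕ} {x a b : ℝ}
    (hx : x ∈ Wint lam i) :
    Flam lam x ∈ Ioc a b ↔ x ∈ Ioc (invBranch lam i a) (invBranch lam i b) := by
  have hc := branchScale_pos h0 h1 i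
  rw [Flam_of_mem_Wint h0.le h1.le hx, mem_Ioc, mem_Ioc, lt_div_iff₀ hc, div_le_iff₀ hc,
    invBranch, invBranch]
  constructor <;> rintro ⟨h, h'⟩ <;> constructor <;> linarith

theorem pow_le_invBranch (h0 : 0 < lam) (h1 : lam < 1) (i : ℕ) {a : ℝ} (ha : 0 ≤ a) :
    lam ^ i ≤ invBranch lam i a :=
  le_add_of_nonneg_right (mul_nonneg (branchScale_pos h0 h1 i).le ha)

theorem invBranch_le_pow (h0 : 0 < lam) (h1 : lam < 1) {i m : ℕ} (hi : 1 ≤ i)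
    (him : i ≤ m + 1) {b : ℝ} (hb : b ≤ lam ^ (m - 1)) :
    invBranch lam i b ≤ lam ^ (i - 1) := by
  obtain rfl | hi := hi.eq_or_lt
  · have : b ≤ 1 := hb.trans (pow_le_one₀ h0.le h1.le)
    norm_num [invBranch, branchScale]
    nlinarith
  obtain ⟨n, rfl⟩ : ∃ n, i = n + 2 := ⟨i - 2, by omega⟩
  have hb' : b ≤ lam ^ n := hb.trans (pow_le_pow_of_le_one h0.le h1.le (by omega))
  have := mul_le_mul_of_nonneg_left hb' (mul_pos h0 (sub_pos.2 h1)).le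
  simp only [invBranch, branchScale, if_neg (by omega : n + 2 ≠ 1), Nat.add_succ_sub_one]
  rw [pow_succ, pow_succ]
  nlinarith

theorem pow_pred_le_invBranch (h0 : 0 < lam) (h1 : lam < 1) {i m : ℕ} (him : m + 2 ≤ i)
    {a : ℝ} (ha : lam ^ m ≤ a) : lam ^ (i - 1) ≤ invBranch lam i a := by
  obtain ⟨n, rfl⟩ : ∃ n, i = n + 2 := ⟨i - 2, by omega⟩
  have ha' : lam ^ n ≤ a := (pow_le_pow_of_le_one h0.le h1.le (by omega)).trans ha
  have := mul_le_mul_of_nonneg_left ha' (mul_pos h0 (sub_pos.2 h1)).le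
  simp only [invBranch, branchScale, if_neg (by omega : n + 2 ≠ 1), Nat.add_succ_sub_one]
  rw [show lam ^ (n + 2) = lam ^ n * lam * lam by ring, pow_succ]
  nlinarith

end Branches

section Transfer

variable {lam : ℝ}

theorem Ioc_invBranch_subset_Wint (h0 : 0 < lam) (h1 : lam < 1) {i m : ℕ} (hi : 1 ≤ i)
    (him : i ≤ m + 1) {a b : ℝ} (ha : 0 ≤ a) (hb : b ≤ lam ^ (m - 1)) :
    Ioc (invBranch lam i a) (invBranch lam i b) ⊆ Wint lam i :=
  Ioc_subset_Ioc (pow_le_invBranch h0 h1 i ha) (invBranch_le_pow h0 h1 hi him hb)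

theorem Flam_preimage_Ioc (h0 : 0 < lam) (h1 : lam < 1) {m : ℕ} {a b : ℝ} (ha : lam ^ m ≤ a)
    (hb : b ≤ lam ^ (m - 1)) :
    Flam lam ⁻¹' Ioc a b =
      ⋃ i ∈ Finset.Icc 1 (m + 1), Ioc (invBranch lam i a) (invBranch lam i b) := by
  have ha0 : 0 ≤ a := (pow_pos h0 m).le.trans ha
  ext x
  simp only [mem_preimage, mem_iUnion, Finset.mem_Icc, exists_prop]
  constructor
  · intro hFx
    have hx : x ∈ Ioc (0 : ℝ) 1 := by
      by_contra hx
      rw [Flam_of_notMem hx] at hFx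
      exact hx (Ioc_subset_Ioc ha0 (hb.trans (pow_le_one₀ h0.le h1.le)) hFx)
    rw [← iUnion_Wint h0 h1, mem_iUnion] at hx
    obtain ⟨i, hi⟩ := hx
    have hJ := (Flam_mem_Ioc_iff h0 h1 hi).1 hFx
    refine ⟨i, ⟨Nat.one_le_iff_ne_zero.2 ?_, ?_⟩, hJ⟩
    · rintro rfl
      simp [Wint_zero] at hi
    · by_contra him
      exact (pow_pred_le_invBranch h0 h1 (by omega) ha).not_gt (hJ.1.trans_le hi.2)
  · rintro ⟨i, ⟨hi, him⟩, hx⟩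
    exact (Flam_mem_Ioc_iff h0 h1 (Ioc_invBranch_subset_Wint h0 h1 hi him ha0 hb hx)).2 hx

theorem volume_preimage_iterate_Ioc (h0 : 0 < lam) (h1 : lam < 1) (k : ℕ) {m : ℕ} {a b : ℝ}
    (ha : lam ^ m ≤ a) (hb : b ≤ lam ^ (m - 1)) :
    volume ((Flam lam)^[k] ⁻¹' Ioc a b) = ENNReal.ofReal (b - a) * iterDensity lam k m := by
  induction k generalizing m a b with
  | zero => simp [iterDensity, Real.volume_Ioc]
  | succ k ih =>
    have ha0 : 0 ≤ a := (pow_pos h0 m).le.trans ha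
    have hsub : ∀ i ∈ Finset.Icc 1 (m + 1),
        Ioc (invBranch lam i a) (invBranch lam i b) ⊆ Wint lam i := fun i hi =>
      Ioc_invBranch_subset_Wint h0 h1 (Finset.mem_Icc.1 hi).1 (Finset.mem_Icc.1 hi).2 ha0 hb
    rw [Function.iterate_succ', preimage_comp, Flam_preimage_Ioc h0 h1 ha hb, preimage_iUnion₂,
      measure_biUnion_finset, iterDensity, Finset.mul_sum]
    · refine Finset.sum_congr rfl fun i hi => ?_
      rw [Finset.mem_Icc] at hi
      rw [ih (pow_le_invBranch h0 h1 i ha0) (invBranch_le_pow h0 h1 hi.1 hi.2 hb), ← mul_assoc,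
        ← ENNReal.ofReal_mul' (branchScale_pos h0 h1 i).le, invBranch, invBranch]
      congr 2
      ring
    · exact fun i hi j hj hij =>
        ((pairwise_disjoint_Wint h0.le h1.le hij).mono (hsub i hi) (hsub j hj)).preimage _
    · exact fun i _ => (measurable_Flam h0.le h1.le).iterate k measurableSet_Ioc

theorem branchMass_eq (h0 : 0 < lam) (h1 : lam < 1) (k m : ℕ) :
    branchMass lam k m = ENNReal.ofReal (lam ^ (m - 1) - lam ^ m) * iterDensity lam k m :=
  volume_preimage_iterate_Ioc h0 h1 k le_rfl le_rfl

theorem branchMass_zero_right (lam : ℝ) (k : ℕ) : branchMass lam k 0 = 0 := by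
  simp [branchMass, Wint_zero]

theorem branchMass_zero_succ (h0 : 0 < lam) (h1 : lam < 1) (j : ℕ) :
    branchMass lam 0 (j + 1) = geomWeight lam j := by
  rw [branchMass_eq h0 h1, iterDensity, mul_one, geomWeight, Nat.add_sub_cancel, pow_succ]
  ring_nf

theorem length_mul_branchScale {i : ℕ} (hi : 1 ≤ i) (j : ℕ) :
    (lam ^ (minTarget i + j - 1) - lam ^ (minTarget i + j)) * branchScale lam i =
      (lam ^ (i - 1) - lam ^ i) * ((1 - lam) * lam ^ j) := by
  obtain rfl | hi := hi.eq_or_lt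
  · simp only [minTarget, branchScale, if_pos]
    rw [show max (1 - 1) 1 + j - 1 = j by omega, show max (1 - 1) 1 + j = j + 1 by omega]
    ring
  · obtain ⟨n, rfl⟩ : ∃ n, i = n + 2 := ⟨i - 2, by omega⟩
    simp only [minTarget, branchScale, if_neg (by omega : n + 2 ≠ 1)]
    rw [show max (n + 2 - 1) 1 + j - 1 = n + j by omega,
      show max (n + 2 - 1) 1 + j = n + j + 1 by omega, Nat.add_succ_sub_one]
    ring

theorem branchMass_succ (h0 : 0 < lam) (h1 : lam < 1) (k m : ℕ) :
    branchMass lam (k + 1) m = ∑' i, if 1 ≤ i ∧ minTarget i ≤ m then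
      ENNReal.ofReal ((lam ^ (m - 1) - lam ^ m) * branchScale lam i) * iterDensity lam k i
      else 0 := by
  rw [branchMass_eq h0 h1, iterDensity, Finset.mul_sum]
  obtain _ | m := m
  · simp
  rw [tsum_eq_sum (s := Finset.Icc 1 (m + 2))]
  · refine Finset.sum_congr rfl fun i hi => ?_
    rw [if_pos (by simp only [Finset.mem_Icc, minTarget] at hi ⊢; omega),
      ENNReal.ofReal_mul' (branchScale_pos h0 h1 i).le, mul_assoc]
  · intro i hi
    rw [if_neg (by simp only [Finset.mem_Icc, minTarget] at hi ⊢; omega)]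

theorem branchMass_mul_geomWeight (h0 : 0 < lam) (h1 : lam < 1) {i : ℕ} (hi : 1 ≤ i)
    (k j : ℕ) :
    branchMass lam k i * geomWeight lam j =
      ENNReal.ofReal ((lam ^ (minTarget i + j - 1) - lam ^ (minTarget i + j)) *
        branchScale lam i) * iterDensity lam k i := by
  rw [length_mul_branchScale hi,
    ENNReal.ofReal_mul' (mul_nonneg (sub_nonneg.2 h1.le) (pow_nonneg h0.le j)),
    branchMass_eq h0 h1, geomWeight]
  ring

theorem tsum_mul_branchMass_succ (h0 : 0 < lam) (h1 : lam < 1) (w : ℕ → ℝ≥0∞) (k : ℕ) :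
    ∑' m, w m * branchMass lam (k + 1) m =
      ∑' i, branchMass lam k i * ∑' j, geomWeight lam j * w (minTarget i + j) := by
  simp_rw [branchMass_succ h0 h1, ← ENNReal.tsum_mul_left, mul_ite, mul_zero]
  rw [ENNReal.tsum_comm]
  congr 1
  ext i
  obtain _ | i := i
  · simp [branchMass_zero_right]
  simp only [le_add_iff_nonneg_left, zero_le, true_and]
  rw [tsum_ite_le_eq_tsum_add]
  congr 1
  ext j
  rw [← branchMass_mul_geomWeight h0 h1 (Nat.le_add_left 1 i)]
  ring

end Transfer

section Chain

variable {lam : ℝ}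

theorem tsum_mul_branchMass_zero (h0 : 0 < lam) (h1 : lam < 1) (w : ℕ → ℝ≥0∞) :
    ∑' m, w m * branchMass lam 0 m = ∑' j, geomWeight lam j * w (1 + j) := by
  calc ∑' m, w m * branchMass lam 0 m
      = ∑' m, if 1 ≤ m then w m * branchMass lam 0 m else 0 := by
        congr 1
        ext m
        obtain _ | m := m
        · simp [branchMass_zero_right]
        · simp
    _ = _ := by
        rw [tsum_ite_le_eq_tsum_add]
        congr 1
        ext j
        rw [add_comm 1 j, branchMass_zero_succ h0 h1, mul_comm]

theorem tsum_geomWeight_mul_pow (h0 : 0 ≤ lam) (h1 : lam ≤ 1) {r : ℝ} (hr : 0 ≤ r)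
    (hlr : lam * r < 1) :
    ∑' j, geomWeight lam j * ENNReal.ofReal r ^ j =
      ENNReal.ofReal ((1 - lam) / (1 - lam * r)) := by
  have hterm : ∀ j, geomWeight lam j * ENNReal.ofReal r ^ j =
      ENNReal.ofReal ((1 - lam) * (lam * r) ^ j) := fun j => by
    rw [geomWeight, ← ENNReal.ofReal_pow hr, ← ENNReal.ofReal_mul' (pow_nonneg hr j), mul_pow,
      mul_assoc]
  rw [tsum_congr hterm, ← ENNReal.ofReal_tsum_of_nonneg
      (fun j => mul_nonneg (sub_nonneg.2 h1) (pow_nonneg (mul_nonneg h0 hr) j))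
      ((summable_geometric_of_lt_one (mul_nonneg h0 hr) hlr).mul_left _),
    tsum_mul_left, tsum_geometric_of_lt_one (mul_nonneg h0 hr) hlr, div_eq_mul_inv]

theorem tsum_geomWeight (h0 : 0 ≤ lam) (h1 : lam < 1) : ∑' j, geomWeight lam j = 1 := by
  simpa [div_self (sub_pos.2 h1).ne'] using tsum_geomWeight_mul_pow h0 h1.le zero_le_one (by simpa)

theorem tsum_branchMass (h0 : 0 < lam) (h1 : lam < 1) (k : ℕ) :
    ∑' m, branchMass lam k m = 1 := by
  induction k with
  | zero => simpa [tsum_geomWeight h0.le h1] using tsum_mul_branchMass_zero h0 h1 fun _ => 1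
  | succ k ih =>
    simpa [tsum_geomWeight h0.le h1, ih] using tsum_mul_branchMass_succ h0 h1 (fun _ => 1) k

theorem tsum_mul_branchMass_succ_le (h0 : 0 < lam) (h1 : lam < 1) {w : ℕ → ℝ≥0∞}
    {ρ c : ℝ≥0∞}
    (hw : ∀ i, 1 ≤ i → ∑' j, geomWeight lam j * w (minTarget i + j) ≤ ρ * w i + c)
    (k : ℕ) :
    ∑' m, w m * branchMass lam (k + 1) m ≤ ρ * ∑' m, w m * branchMass lam k m + c := by
  rw [tsum_mul_branchMass_succ h0 h1]
  calc ∑' i, branchMass lam k i * ∑' j, geomWeight lam j * w (minTarget i + j)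
      ≤ ∑' i, (ρ * (w i * branchMass lam k i) + c * branchMass lam k i) := by
        refine ENNReal.tsum_le_tsum fun i => ?_
        obtain _ | i := i
        · simp [branchMass_zero_right]
        calc _ ≤ branchMass lam k (i + 1) * (ρ * w (i + 1) + c) := by
              gcongr
              exact hw _ (Nat.le_add_left 1 i)
          _ = _ := by ring
    _ = ρ * ∑' m, w m * branchMass lam k m + c := by
        rw [ENNReal.tsum_add, ENNReal.tsum_mul_left, ENNReal.tsum_mul_left,
          tsum_branchMass h0 h1, mul_one]

theorem geomWeight_zero_mul_branchMass_le (h0 : 0 < lam) (h1 : lam < 1) (k : ℕ) {n : ℕ}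
    (hn : 1 ≤ n) : geomWeight lam 0 * branchMass lam k (n + 1) ≤ branchMass lam (k + 1) n := by
  -- From `n + 1` the chain moves to `n` when `G = 0`.
  have h := tsum_mul_branchMass_succ h0 h1 (fun m => if m = n then 1 else 0) k
  simp only [ite_mul, one_mul, zero_mul, tsum_ite_eq] at h
  rw [h]
  calc geomWeight lam 0 * branchMass lam k (n + 1)
      = branchMass lam k (n + 1) *
          (geomWeight lam 0 * if minTarget (n + 1) + 0 = n then 1 else 0) := by
        rw [if_pos (by simp only [minTarget]; omega), mul_one, mul_comm]
    _ ≤ _ := by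
        refine le_trans ?_ (ENNReal.le_tsum (n + 1))
        gcongr
        exact ENNReal.le_tsum (f := fun j => geomWeight lam j * _) 0

theorem geomWeight_zero_pow_mul_branchMass_le (h0 : 0 < lam) (h1 : lam < 1) (j k : ℕ) :
    geomWeight lam 0 ^ j * branchMass lam k (j + 1) ≤ branchMass lam (k + j) 1 := by
  induction j generalizing k with
  | zero => simp
  | succ j ih =>
    calc geomWeight lam 0 ^ (j + 1) * branchMass lam k (j + 1 + 1)
        = geomWeight lam 0 ^ j * (geomWeight lam 0 * branchMass lam k (j + 1 + 1)) := by ring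
      _ ≤ geomWeight lam 0 ^ j * branchMass lam (k + 1) (j + 1) := by
          gcongr
          exact geomWeight_zero_mul_branchMass_le h0 h1 k (Nat.le_add_left 1 j)
      _ ≤ branchMass lam (k + (j + 1)) 1 := by
          simpa [add_assoc, add_comm 1 j] using ih (k + 1)

end Chain

section Transient

variable {lam : ℝ}

theorem tsum_mul_branchMass_le_pow (h0 : 0 < lam) (h1 : lam < 1) {w : ℕ → ℝ≥0∞}
    {ρ : ℝ≥0∞} (hw : ∀ i, 1 ≤ i → ∑' j, geomWeight lam j * w (minTarget i + j) ≤ ρ * w i)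
    (k : ℕ) :
    ∑' m, w m * branchMass lam k m ≤ ρ ^ k * ∑' m, w m * branchMass lam 0 m := by
  induction k with
  | zero => simp
  | succ k ih =>
    calc _ ≤ ρ * ∑' m, w m * branchMass lam k m + 0 :=
          tsum_mul_branchMass_succ_le h0 h1 (fun i hi => by rw [add_zero]; exact hw i hi) k
      _ ≤ ρ ^ (k + 1) * ∑' m, w m * branchMass lam 0 m := by
          rw [add_zero, pow_succ', mul_assoc]
          exact mul_le_mul_right ih ρ

theorem tsum_geomWeight_mul_pow_minTarget_le (h1 : 1 / 2 ≤ lam) (h2 : lam < 1) {i : ℕ}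
    (hi : 1 ≤ i) :
    ∑' j, geomWeight lam j * ENNReal.ofReal (2 * lam)⁻¹ ^ (minTarget i + j) ≤
      ENNReal.ofReal (4 * lam * (1 - lam)) * ENNReal.ofReal (2 * lam)⁻¹ ^ i := by
  have h0 : 0 < lam := by linarith
  set θ := ENNReal.ofReal (2 * lam)⁻¹
  have hgeom : ∑' j, geomWeight lam j * θ ^ j = ENNReal.ofReal (2 * (1 - lam)) := by
    rw [tsum_geomWeight_mul_pow h0.le h2.le (by positivity) (by field_simp; linarith)]
    congr 1
    field_simp
    ring
  simp_rw [pow_add, mul_left_comm _ (θ ^ minTarget i), ENNReal.tsum_mul_left, hgeom]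
  obtain rfl | hi := hi.eq_or_lt
  · change θ ^ 1 * _ ≤ _ * θ ^ 1
    rw [pow_one, mul_comm (ENNReal.ofReal _) θ]
    exact mul_le_mul_right (ENNReal.ofReal_le_ofReal (by nlinarith)) θ
  · obtain ⟨n, rfl⟩ : ∃ n, i = n + 2 := ⟨i - 2, by omega⟩
    rw [show minTarget (n + 2) = n + 1 by simp [minTarget], pow_succ θ (n + 1),
      mul_comm (ENNReal.ofReal _), mul_assoc, ← ENNReal.ofReal_mul (by positivity),
      show (2 * lam)⁻¹ * (4 * lam * (1 - lam)) = 2 * (1 - lam) by field_simp; ring]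

theorem tendsto_branchMass_one (h1 : 1 / 2 < lam) (h2 : lam < 1) :
    Tendsto (fun k => branchMass lam k 1) atTop (𝓝 0) := by
  have h0 : 0 < lam := by linarith
  set θ := ENNReal.ofReal (2 * lam)⁻¹
  set S₀ := ∑' m, θ ^ m * branchMass lam 0 m
  have hS₀ : S₀ ≠ ⊤ := by
    have h : S₀ ≤ ENNReal.ofReal (4 * lam * (1 - lam)) * θ ^ 1 := by
      simp only [S₀, tsum_mul_branchMass_zero h0 h2]
      exact tsum_geomWeight_mul_pow_minTarget_le h1.le h2 le_rfl
    exact ne_top_of_le_ne_top (ENNReal.mul_ne_top ENNReal.ofReal_ne_top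
      (ENNReal.pow_ne_top ENNReal.ofReal_ne_top)) h
  have hθ : θ ≠ 0 := (ENNReal.ofReal_pos.2 (by positivity)).ne'
  have hρ : ENNReal.ofReal (4 * lam * (1 - lam)) < 1 :=
    ENNReal.ofReal_lt_one.2 (by nlinarith [sq_pos_of_pos (by linarith : 0 < 2 * lam - 1)])
  have hlim :
      Tendsto (fun k => ENNReal.ofReal (4 * lam * (1 - lam)) ^ k * S₀ / θ) atTop (𝓝 0) := by
    simpa using ENNReal.Tendsto.div_const (ENNReal.Tendsto.mul_const
      (ENNReal.tendsto_pow_atTop_nhds_zero_of_lt_one hρ) (Or.inr hS₀)) (Or.inr hθ)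
  refine tendsto_of_tendsto_of_tendsto_of_le_of_le tendsto_const_nhds hlim (fun _ => zero_le)
    fun k => ?_
  rw [ENNReal.le_div_iff_mul_le (Or.inl hθ) (Or.inl ENNReal.ofReal_ne_top), mul_comm]
  exact (pow_one θ ▸ ENNReal.le_tsum (f := fun m => θ ^ m * branchMass lam k m) 1).trans
    (tsum_mul_branchMass_le_pow h0 h2
      (fun i hi => tsum_geomWeight_mul_pow_minTarget_le h1.le h2 hi) k)

end Transient

section Moments

variable {lam : ℝ}

theorem tsum_geomWeight_mul_natCast (h0 : 0 ≤ lam) (h1 : lam < 1) :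
    ∑' j, geomWeight lam j * (j : ℝ≥0∞) = ENNReal.ofReal (lam / (1 - lam)) := by
  have hlam : ‖lam‖ < 1 := by rwa [Real.norm_eq_abs, abs_of_nonneg h0]
  have hterm : ∀ j : ℕ, geomWeight lam j * (j : ℝ≥0∞) =
      ENNReal.ofReal ((1 - lam) * ((j : ℝ) * lam ^ j)) := fun j => by
    rw [geomWeight, ← ENNReal.ofReal_natCast, ← ENNReal.ofReal_mul' (Nat.cast_nonneg j)]
    ring_nf
  rw [tsum_congr hterm, ← ENNReal.ofReal_tsum_of_nonneg
      (fun j => mul_nonneg (sub_nonneg.2 h1.le) (mul_nonneg (Nat.cast_nonneg j) (pow_nonneg h0 j)))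
      (Summable.mul_left _ (by simpa using summable_pow_mul_geometric_of_norm_lt_one 1 hlam)),
    tsum_mul_left, tsum_coe_mul_geometric_of_norm_lt_one hlam]
  congr 1
  field_simp [(sub_pos.2 h1).ne']

theorem tsum_geomWeight_mul_sq_ne_top (h0 : 0 ≤ lam) (h1 : lam < 1) :
    ∑' j, geomWeight lam j * (j : ℝ≥0∞) ^ 2 ≠ ⊤ := by
  have hlam : ‖lam‖ < 1 := by rwa [Real.norm_eq_abs, abs_of_nonneg h0]
  have hterm : ∀ j : ℕ, geomWeight lam j * (j : ℝ≥0∞) ^ 2 =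
      ENNReal.ofReal ((1 - lam) * ((j : ℝ) ^ 2 * lam ^ j)) := fun j => by
    rw [geomWeight, ← ENNReal.ofReal_natCast, ← ENNReal.ofReal_pow (Nat.cast_nonneg j),
      ← ENNReal.ofReal_mul' (by positivity)]
    ring_nf
  rw [tsum_congr hterm, ← ENNReal.ofReal_tsum_of_nonneg
    (fun j => mul_nonneg (sub_nonneg.2 h1.le) (mul_nonneg (by positivity) (pow_nonneg h0 j)))
    ((summable_pow_mul_geometric_of_norm_lt_one 2 hlam).mul_left _)]
  exact ENNReal.ofReal_ne_top

theorem tsum_geomWeight_mul_add (h0 : 0 ≤ lam) (h1 : lam < 1) (t : ℕ) :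
    ∑' j, geomWeight lam j * ((t + j : ℕ) : ℝ≥0∞) =
      t + ENNReal.ofReal (lam / (1 - lam)) := by
  simp_rw [Nat.cast_add, mul_add]
  rw [ENNReal.tsum_add, ENNReal.tsum_mul_right, tsum_geomWeight h0 h1, one_mul,
    tsum_geomWeight_mul_natCast h0 h1]

theorem tsum_geomWeight_mul_add_sq (h0 : 0 ≤ lam) (h1 : lam < 1) (t : ℕ) :
    ∑' j, geomWeight lam j * ((t + j : ℕ) : ℝ≥0∞) ^ 2 =
      t ^ 2 + 2 * t * ENNReal.ofReal (lam / (1 - lam)) +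
        ∑' j, geomWeight lam j * (j : ℝ≥0∞) ^ 2 := by
  have hterm : ∀ j : ℕ, geomWeight lam j * ((t + j : ℕ) : ℝ≥0∞) ^ 2 =
      geomWeight lam j * t ^ 2 + 2 * t * (geomWeight lam j * j) +
        geomWeight lam j * (j : ℝ≥0∞) ^ 2 := fun j => by
    push_cast
    ring
  rw [tsum_congr hterm, ENNReal.tsum_add, ENNReal.tsum_add, ENNReal.tsum_mul_right,
    ENNReal.tsum_mul_left, tsum_geomWeight h0 h1, one_mul, tsum_geomWeight_mul_natCast h0 h1]

end Moments

section Critical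

theorem minTarget_sq_add_le {i : ℕ} (hi : 1 ≤ i) :
    minTarget i ^ 2 + 2 * minTarget i ≤ i ^ 2 + 3 := by
  obtain rfl | hi := hi.eq_or_lt
  · decide
  obtain ⟨n, rfl⟩ : ∃ n, i = n + 2 := ⟨i - 2, by omega⟩
  rw [show minTarget (n + 2) = n + 1 by simp [minTarget]]
  nlinarith

theorem sum_range_branchMass_half_one_le (K : ℕ) :
    ∑ k ∈ Finset.range K, branchMass (1 / 2) k 1 ≤
      ∑' m : ℕ, (m : ℝ≥0∞) * branchMass (1 / 2) K m := by
  have h0 : (0 : ℝ) < 1 / 2 := by norm_num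
  have h1 : (1 / 2 : ℝ) < 1 := by norm_num
  induction K with
  | zero => simp
  | succ K ih =>
    set p := branchMass (1 / 2) K
    rw [Finset.sum_range_succ, tsum_mul_branchMass_succ h0 h1 fun m : ℕ => (m : ℝ≥0∞)]
    simp_rw [tsum_geomWeight_mul_add h0.le h1]
    calc _ ≤ ∑' m : ℕ, (m : ℝ≥0∞) * p m + p 1 := by gcongr
      _ ≤ ∑' i, (p i * i + p i * ((minTarget i + 1 - i : ℕ) : ℝ≥0∞)) := by
          rw [ENNReal.tsum_add]
          refine add_le_add (tsum_congr fun i => mul_comm _ _).le (le_trans ?_ (ENNReal.le_tsum 1))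
          simp [minTarget]
      _ = _ := by
          congr 1
          ext i
          rw [← mul_add, ← Nat.cast_add,
            show i + (minTarget i + 1 - i) = minTarget i + 1 by unfold minTarget; omega]
          norm_num [p]

theorem exists_tsum_sq_mul_branchMass_half_le :
    ∃ c : ℝ≥0∞, c ≠ ⊤ ∧ ∀ K : ℕ,
      ∑' m : ℕ, (m : ℝ≥0∞) ^ 2 * branchMass (1 / 2) K m ≤ c * (K + 1) := by
  have h0 : (0 : ℝ) < 1 / 2 := by norm_num
  have h1 : (1 / 2 : ℝ) < 1 := by norm_num
  set C := ∑' j, geomWeight (1 / 2) j * (j : ℝ≥0∞) ^ 2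
  have hsq : ∀ t : ℕ, ∑' j, geomWeight (1 / 2) j * ((t + j : ℕ) : ℝ≥0∞) ^ 2 =
      ((t ^ 2 + 2 * t : ℕ) : ℝ≥0∞) + C := fun t => by
    rw [tsum_geomWeight_mul_add_sq h0.le h1]
    norm_num [C]
  refine ⟨3 + C, ENNReal.add_ne_top.2 ⟨by simp, tsum_geomWeight_mul_sq_ne_top h0.le h1⟩,
    fun K => ?_⟩
  induction K with
  | zero =>
    rw [tsum_mul_branchMass_zero h0 h1 fun m : ℕ => (m : ℝ≥0∞) ^ 2, hsq]
    norm_num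
  | succ K ih =>
    have hdrift : ∀ i, 1 ≤ i →
        ∑' j, geomWeight (1 / 2) j * ((minTarget i + j : ℕ) : ℝ≥0∞) ^ 2 ≤
          1 * (i : ℝ≥0∞) ^ 2 + (3 + C) :=
      fun i hi => by
        rw [hsq, one_mul, ← add_assoc]
        gcongr
        exact_mod_cast minTarget_sq_add_le hi
    calc _ ≤ 1 * ∑' m : ℕ, (m : ℝ≥0∞) ^ 2 * branchMass (1 / 2) K m + (3 + C) :=
          tsum_mul_branchMass_succ_le h0 h1 hdrift K
      _ ≤ (3 + C) * (K + 1) + (3 + C) := by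
          rw [one_mul]
          gcongr
      _ = (3 + C) * ((K + 1 : ℕ) + 1) := by
          push_cast
          ring

end Critical

theorem frequently_branchMass_half_one_lt {δ : ℝ≥0∞} (hδ : δ ≠ 0) :
    ∃ᶠ k in atTop, branchMass (1 / 2) k 1 < δ := by
  have h0 : (0 : ℝ) < 1 / 2 := by norm_num
  have h1 : (1 / 2 : ℝ) < 1 := by norm_num
  obtain ⟨c, hc, hsq⟩ := exists_tsum_sq_mul_branchMass_half_le
  refine frequently_lt_of_mul_sum_le hc (fun T K => ?_) hδ
  calc (T : ℝ≥0∞) * ∑ k ∈ Finset.range K, branchMass (1 / 2) k 1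
      ≤ T * ∑' m : ℕ, (m : ℝ≥0∞) * branchMass (1 / 2) K m := by
        gcongr
        exact sum_range_branchMass_half_one_le K
    _ = ∑' m : ℕ, (T * m : ℝ≥0∞) * branchMass (1 / 2) K m := by
        rw [← ENNReal.tsum_mul_left]
        simp_rw [mul_assoc]
    _ ≤ ∑' m : ℕ, ((T : ℝ≥0∞) ^ 2 * branchMass (1 / 2) K m +
          (m : ℝ≥0∞) ^ 2 * branchMass (1 / 2) K m) := by
        refine ENNReal.tsum_le_tsum fun m => ?_
        rw [← add_mul]
        gcongr
        exact_mod_cast (show T * m ≤ T ^ 2 + m ^ 2 by nlinarith)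
    _ ≤ T ^ 2 + c * (K + 1) := by
        rw [ENNReal.tsum_add, ENNReal.tsum_mul_left, tsum_branchMass h0 h1, mul_one]
        gcongr
        exact hsq K

theorem frequently_branchMass_one_lt {lam : ℝ} (h1 : 1 / 2 ≤ lam) (h2 : lam < 1)
    {δ : ℝ≥0∞} (hδ : δ ≠ 0) : ∃ᶠ k in atTop, branchMass lam k 1 < δ := by
  obtain rfl | h1 := h1.eq_or_lt
  · exact frequently_branchMass_half_one_lt hδ
  · exact ((tendsto_branchMass_one h1 h2).eventually
      (gt_mem_nhds (pos_iff_ne_zero.2 hδ))).frequently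

theorem exists_branchMass_lt {lam : ℝ} (h1 : 1 / 2 ≤ lam) (h2 : lam < 1) (n : ℕ)
    {δ : ℝ≥0∞} (hδ : δ ≠ 0) : ∃ k, branchMass lam k n < δ := by
  have h0 : 0 < lam := by linarith
  obtain _ | j := n
  · exact ⟨0, by rwa [branchMass_zero_right, pos_iff_ne_zero]⟩
  have hq0 : geomWeight lam 0 ^ j ≠ 0 := pow_ne_zero _ (by simp [geomWeight]; linarith)
  have hqt : geomWeight lam 0 ^ j ≠ ⊤ := ENNReal.pow_ne_top ENNReal.ofReal_ne_top
  obtain ⟨k, hk, hlt⟩ := Filter.frequently_atTop.1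
    (frequently_branchMass_one_lt h1 h2 (mul_ne_zero hq0 hδ)) j
  refine ⟨k - j, (ENNReal.mul_lt_mul_iff_right hq0 hqt).1 ?_⟩
  calc geomWeight lam 0 ^ j * branchMass lam (k - j) (j + 1)
      ≤ branchMass lam (k - j + j) 1 := geomWeight_zero_pow_mul_branchMass_le h0 h2 j (k - j)
    _ < geomWeight lam 0 ^ j * δ := by rwa [Nat.sub_add_cancel hk]

/-- For `lam ∈ [1/2, 1)` there is no `F_lam`-invariant Borel probability
measure on `(0,1]` absolutely continuous w.r.t. Lebesgue measure. -/
theorem stmt1 (lam : ℝ) (h1 : 1/2 ≤ lam) (h2 : lam < 1) :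
    ¬ ∃ μ : Measure ℝ, IsProbabilityMeasure μ ∧ μ (Set.Ioc 0 1) = 1 ∧
      (∀ A : Set ℝ, MeasurableSet A → μ (Flam lam ⁻¹' A) = μ A) ∧
      μ ≪ volume := by
  rintro ⟨μ, hμ, hI, hinv, hac⟩
  have h0 : 0 < lam := by linarith
  have hF : MeasurePreserving (Flam lam) μ μ := by
    refine ⟨measurable_Flam h0.le h2.le, Measure.ext fun A hA => ?_⟩
    rw [Measure.map_apply (measurable_Flam h0.le h2.le) hA, hinv A hA]
  have hW : ∀ n, μ (Wint lam n) = 0 := by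
    intro n
    by_contra hne
    obtain ⟨δ, hδ, hsmall⟩ := hac.exists_pos_forall_measure_lt hne
    obtain ⟨k, hk⟩ := exists_branchMass_lt h1 h2 n hδ.ne'
    have hWn : MeasurableSet (Wint lam n) := measurableSet_Ioc
    have := hsmall _ hk
    rw [(hF.iterate k).measure_preimage hWn.nullMeasurableSet] at this
    exact this.false
  have hI0 : μ (Ioc 0 1) = 0 := by
    rw [← iUnion_Wint h0 h2]
    exact measure_iUnion_null hW
  simp [hI] at hI0
end

section
/- Let λ ∈ (0,1) and t > 0, and set p = log ψ(t) where ψ(t) = (1−λ)^t/(1−λ^t). Then there exists a (t,p)-conformal Borel probability measure m on (0,1] satisfying m(W_k) = (1−λ^t)·λ^{t(k−1)} for every k ≥ 1. -/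
open MeasureTheory Set Filter Topology

/-!
Put `μ = λ^t`. The choice of `p` makes `e^p s_n^t = 1 / r_μ(n)`, where `r_μ(n)` is the
reciprocal slope of `F_μ` on its `n`-th branch. So it suffices to find an increasing conjugacy
`h` with `h ∘ F_λ = F_μ ∘ h` and `h(λ^j) = μ^j`: its Stieltjes measure `dh` gives `W_n` the
mass `μ^(n-1) - μ^n` and is scaled by `F_λ` exactly as Lebesgue measure is scaled by `F_μ`.

On `W_n` the conjugacy satisfies `h = μ^n + r_μ(n) · h ∘ F_λ`. We take for `h` the least fixed
point of this equation among `[0, ∞]`-valued functions; monotonicity and `h(λ^j) ≤ μ^j` pass to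
it by fixed-point induction. Instead of proving `h` continuous we use the Stieltjes function of
its right limits, which satisfy the same functional equation.
-/

theorem Monotone.rightLim_affine_eq_of_eventually {f g : ℝ → ℝ} (hf : Monotone f)
    (hg : Monotone g) {a c d e x : ℝ} (hd : 0 < d)
    (h : ∀ᶠ y in 𝓝[>] x, f (d * y + e) = a + c * g y) :
    Function.rightLim f (d * x + e) = a + c * Function.rightLim g x := by
  have hβ : Tendsto (fun y => d * y + e) (𝓝[>] x) (𝓝[>] (d * x + e)) := by
    refine tendsto_nhdsWithin_of_tendsto_nhds_of_eventually_within _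
      ((Continuous.tendsto (by fun_prop) x).mono_left nhdsWithin_le_nhds) ?_
    filter_upwards [self_mem_nhdsWithin] with y (hy : x < y)
    exact show d * x + e < d * y + e by gcongr
  refine tendsto_nhds_unique ((hf.tendsto_rightLim _).comp hβ) ?_
  exact (tendsto_const_nhds.add (tendsto_const_nhds.mul (hg.tendsto_rightLim x))).congr'
    (h.mono fun y hy => hy.symm)

theorem StieltjesFunction.measure_eq_ofReal_mul_measure_preimage_affine
    (f g : StieltjesFunction ℝ) {a c d e p q : ℝ} (hc : 0 ≤ c) (hd : 0 < d)
    (h : ∀ y ∈ Icc p q, f (d * y + e) = a + c * g y) {A : Set ℝ} (hA : MeasurableSet A)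
    (hAs : A ⊆ Ioc (d * p + e) (d * q + e)) :
    f.measure A = ENNReal.ofReal c * g.measure ((fun y => d * y + e) ⁻¹' A) := by
  set β : ℝ → ℝ := fun y => d * y + e
  set s := Ioc (β p) (β q)
  have hβ_mono : StrictMono β := fun y z hyz => by simp only [β]; gcongr
  have hβ_meas : Measurable β := by fun_prop
  have hβ_inv (u : ℝ) : β ((u - e) / d) = u := by simp only [β]; field_simp; ring
  have on_Ioc {y z : ℝ} (hy : y ∈ Icc p q) (hz : z ∈ Icc p q) :
      f.measure (Ioc (β y) (β z)) = ENNReal.ofReal c * g.measure (β ⁻¹' Ioc (β y) (β z)) := by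
    have hpre : β ⁻¹' Ioc (β y) (β z) = Ioc y z := by
      ext w; simp [hβ_mono.lt_iff_lt, hβ_mono.le_iff_le]
    rw [hpre, f.measure_Ioc, g.measure_Ioc, h y hy, h z hz, ← ENNReal.ofReal_mul hc]
    ring_nf
  have on_inter (u v : ℝ) :
      f.measure (Ioc u v ∩ s) = ENNReal.ofReal c * g.measure (β ⁻¹' (Ioc u v ∩ s)) := by
    rw [Ioc_inter_Ioc]
    rcases le_or_gt (v ⊓ β q) (u ⊔ β p) with hempty | hlt
    · simp [Ioc_eq_empty_of_le hempty]
    rw [← hβ_inv (u ⊔ β p), ← hβ_inv (v ⊓ β q)] at hlt ⊢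
    have hp : β p ≤ β ((u ⊔ β p - e) / d) := by rw [hβ_inv]; exact le_sup_right
    have hq : β ((v ⊓ β q - e) / d) ≤ β q := by rw [hβ_inv]; exact inf_le_right
    rw [hβ_mono.le_iff_le] at hp hq
    rw [hβ_mono.lt_iff_lt] at hlt
    exact on_Ioc ⟨hp, hlt.le.trans hq⟩ ⟨hp.trans hlt.le, hq⟩
  have hrestrict : f.measure.restrict s = (ENNReal.ofReal c • g.measure.map β).restrict s := by
    have : IsFiniteMeasure (f.measure.restrict s) :=
      isFiniteMeasure_restrict.2 (by simp [s, f.measure_Ioc])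
    refine Measure.ext_of_Ioc_finite _ _ ?_ fun u v _ => ?_
    · simpa [s, Measure.map_apply hβ_meas measurableSet_Ioc] using on_inter (β p) (β q)
    · rw [Measure.restrict_apply measurableSet_Ioc, Measure.restrict_apply measurableSet_Ioc,
        Measure.smul_apply, Measure.map_apply hβ_meas (measurableSet_Ioc.inter measurableSet_Ioc),
        smul_eq_mul, on_inter]
  calc f.measure A = f.measure.restrict s A := by
        rw [Measure.restrict_apply hA, inter_eq_left.2 hAs]
    _ = _ := by
      rw [hrestrict, Measure.restrict_apply hA, inter_eq_left.2 hAs, Measure.smul_apply,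
        Measure.map_apply hβ_meas hA, smul_eq_mul]

open scoped ENNReal

namespace Flam

variable {lam mu x y : ℝ} {n : ℕ}

noncomputable def invSlope (lam : ℝ) (n : ℕ) : ℝ := if n = 1 then 1 - lam else lam * (1 - lam)

lemma invSlope_pos (hlam : lam ∈ Ioo 0 1) (n : ℕ) : 0 < invSlope lam n := by
  have : 0 < 1 - lam := sub_pos.2 hlam.2
  unfold invSlope; split_ifs
  · exact this
  · exact mul_pos hlam.1 this

/-- `F` maps `Wint lam n` onto `(0, lam ^ (n - 2)]`; for `n = 1` this is `(0, 1]` because the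
subtraction `n - 2` truncates. -/
lemma invSlope_mul_pow_add_pow (hn : 1 ≤ n) :
    invSlope lam n * lam ^ (n - 2) + lam ^ n = lam ^ (n - 1) := by
  obtain rfl | ⟨k, rfl⟩ : n = 1 ∨ ∃ k, n = k + 2 := by
    rcases n with _ | _ | k <;> simp_all
  · simp [invSlope]
  · simp only [invSlope, show k + 2 ≠ 1 by omega, if_false, show k + 2 - 2 = k by omega,
      show k + 2 - 1 = k + 1 by omega]
    ring

lemma pow_mem_Wint (hlam : lam ∈ Ioo 0 1) (j : ℕ) : lam ^ j ∈ Wint lam (j + 1) :=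
  ⟨pow_lt_pow_right_of_lt_one₀ hlam.1 hlam.2 j.lt_succ_self, le_rfl⟩

lemma exists_mem_Wint (hlam : lam ∈ Ioo 0 1) (hx : x ∈ Ioc 0 1) :
    ∃ n, 1 ≤ n ∧ x ∈ Wint lam n := by
  classical
  have hex : ∃ n : ℕ, lam ^ n < x := exists_pow_lt_of_lt_one hx.1 hlam.2
  have hpos : Nat.find hex ≠ 0 := fun h0 => by
    have := Nat.find_spec hex
    rw [h0, pow_zero] at this
    exact hx.2.not_gt this
  refine ⟨Nat.find hex, Nat.one_le_iff_ne_zero.2 hpos, Nat.find_spec hex, ?_⟩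
  exact not_lt.1 (Nat.find_min hex (Nat.sub_lt (Nat.pos_of_ne_zero hpos) one_pos))

lemma Wint_subset_Ioc (hlam : lam ∈ Ioo 0 1) (n : ℕ) : Wint lam n ⊆ Ioc 0 1 :=
  fun _ hx => ⟨(pow_pos hlam.1 n).trans hx.1, hx.2.trans (pow_le_one₀ hlam.1.le hlam.2.le)⟩

lemma index_le_of_mem_Wint_of_le (hlam : lam ∈ Ioo 0 1) {k : ℕ} (hx : x ∈ Wint lam n)
    (hy : y ∈ Wint lam k) (hxy : x ≤ y) : k ≤ n := by
  by_contra! h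
  have : lam ^ (k - 1) ≤ lam ^ n := pow_le_pow_of_le_one hlam.1.le hlam.2.le (by omega)
  linarith [hx.1, hy.2]

lemma sInf_pow_lt_eq (hlam : lam ∈ Ioo 0 1) (hn : 1 ≤ n) (hx : x ∈ Wint lam n) :
    sInf {k : ℕ | lam ^ k < x} = n := by
  refine le_antisymm (Nat.sInf_le hx.1) (le_csInf ⟨n, hx.1⟩ fun k (hk : lam ^ k < x) => ?_)
  by_contra! h
  have : lam ^ (n - 1) ≤ lam ^ k := pow_le_pow_of_le_one hlam.1.le hlam.2.le (by omega)
  linarith [hx.2]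

lemma Flam_eq_of_mem_Wint (hlam : lam ∈ Ioo 0 1) (hn : 1 ≤ n) (hx : x ∈ Wint lam n) :
    Flam lam x = (x - lam ^ n) / invSlope lam n := by
  have h01 := Wint_subset_Ioc hlam n hx
  rw [Flam, if_pos ⟨h01.1, h01.2⟩, sInf_pow_lt_eq hlam hn hx, invSlope]
  split_ifs with h
  · rw [h, pow_one]
  · rfl

lemma affine_mem_Wint_iff (hlam : lam ∈ Ioo 0 1) (hn : 1 ≤ n) :
    invSlope lam n * y + lam ^ n ∈ Wint lam n ↔ y ∈ Ioc 0 (lam ^ (n - 2)) := by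
  have hr := invSlope_pos hlam n
  rw [Wint, ← invSlope_mul_pow_add_pow hn, mem_Ioc, mem_Ioc]
  constructor
  · rintro ⟨h1, h2⟩; constructor <;> nlinarith
  · rintro ⟨h1, h2⟩; constructor <;> nlinarith

lemma Flam_affine (hlam : lam ∈ Ioo 0 1) (hn : 1 ≤ n) (hy : y ∈ Ioc 0 (lam ^ (n - 2))) :
    Flam lam (invSlope lam n * y + lam ^ n) = y := by
  rw [Flam_eq_of_mem_Wint hlam hn ((affine_mem_Wint_iff hlam hn).2 hy)]
  field_simp [(invSlope_pos hlam n).ne']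
  ring

lemma Flam_mem_of_mem_Wint (hlam : lam ∈ Ioo 0 1) (hn : 1 ≤ n) (hx : x ∈ Wint lam n) :
    Flam lam x ∈ Ioc 0 (lam ^ (n - 2)) := by
  rw [← affine_mem_Wint_iff hlam hn, Flam_eq_of_mem_Wint hlam hn hx]
  convert hx using 1
  field_simp [(invSlope_pos hlam n).ne']
  ring

noncomputable def conjugacyStep (lam mu : ℝ) (g : ℝ → ℝ≥0∞) (x : ℝ) : ℝ≥0∞ :=
  if x ≤ 0 then 0 else if 1 < x then 1 else
    ENNReal.ofReal (mu ^ sInf {k : ℕ | lam ^ k < x}) +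
      ENNReal.ofReal (invSlope mu (sInf {k : ℕ | lam ^ k < x})) * g (Flam lam x)

lemma conjugacyStep_of_mem_Wint (hlam : lam ∈ Ioo 0 1) (hn : 1 ≤ n) (hx : x ∈ Wint lam n)
    (g : ℝ → ℝ≥0∞) :
    conjugacyStep lam mu g x =
      ENNReal.ofReal (mu ^ n) + ENNReal.ofReal (invSlope mu n) * g (Flam lam x) := by
  have h01 := Wint_subset_Ioc hlam n hx
  rw [conjugacyStep, if_neg h01.1.not_ge, if_neg h01.2.not_gt, sInf_pow_lt_eq hlam hn hx]

lemma monotone_conjugacyStep : Monotone (conjugacyStep lam mu) := by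
  intro g g' hg x
  unfold conjugacyStep
  split_ifs
  · exact le_rfl
  · exact le_rfl
  · gcongr; exact hg _

noncomputable def conjugacyStepHom (lam mu : ℝ) : (ℝ → ℝ≥0∞) →o (ℝ → ℝ≥0∞) :=
  ⟨conjugacyStep lam mu, monotone_conjugacyStep⟩

section Step

variable {g : ℝ → ℝ≥0∞} (hlam : lam ∈ Ioo 0 1) (hmu : mu ∈ Ioo 0 1) (hg : Monotone g)
  (hg_pow : ∀ j : ℕ, g (lam ^ j) ≤ ENNReal.ofReal (mu ^ j))
include hlam hmu hg hg_pow

lemma conjugacyStep_le_of_mem_Wint (hn : 1 ≤ n) (hx : x ∈ Wint lam n) :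
    conjugacyStep lam mu g x ≤ ENNReal.ofReal (mu ^ (n - 1)) := by
  have hF := Flam_mem_of_mem_Wint hlam hn hx
  calc conjugacyStep lam mu g x
      ≤ ENNReal.ofReal (mu ^ n) + ENNReal.ofReal (invSlope mu n) * g (lam ^ (n - 2)) := by
        rw [conjugacyStep_of_mem_Wint hlam hn hx]; gcongr; exact hg hF.2
    _ ≤ ENNReal.ofReal (mu ^ n) +
          ENNReal.ofReal (invSlope mu n) * ENNReal.ofReal (mu ^ (n - 2)) := by
        gcongr; exact hg_pow _
    _ = ENNReal.ofReal (mu ^ (n - 1)) := by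
        have hr := (invSlope_pos hmu n).le
        have hμ := hmu.1.le
        rw [← ENNReal.ofReal_mul hr, ← ENNReal.ofReal_add (by positivity) (by positivity),
          add_comm, invSlope_mul_pow_add_pow hn]

lemma conjugacyStep_le_one (x : ℝ) : conjugacyStep lam mu g x ≤ 1 := by
  rcases le_or_gt x 0 with hx0 | hx0
  · simp [conjugacyStep, hx0]
  rcases lt_or_ge 1 x with hx1 | hx1
  · simp [conjugacyStep, hx0.not_ge, hx1]
  obtain ⟨n, hn, hx⟩ := exists_mem_Wint hlam ⟨hx0, hx1⟩
  refine (conjugacyStep_le_of_mem_Wint hlam hmu hg hg_pow hn hx).trans ?_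
  exact ENNReal.ofReal_le_one.2 (pow_le_one₀ hmu.1.le hmu.2.le)

lemma conjugacyStep_pow_le (j : ℕ) :
    conjugacyStep lam mu g (lam ^ j) ≤ ENNReal.ofReal (mu ^ j) :=
  conjugacyStep_le_of_mem_Wint hlam hmu hg hg_pow j.succ_pos (pow_mem_Wint hlam j)

lemma monotone_conjugacyStep_apply : Monotone (conjugacyStep lam mu g) := by
  intro x y hxy
  rcases le_or_gt x 0 with hx0 | hx0
  · simp [conjugacyStep, hx0]
  rcases lt_or_ge 1 y with hy1 | hy1
  · simpa [conjugacyStep, (hx0.trans_le hxy).not_ge, hy1] using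
      conjugacyStep_le_one hlam hmu hg hg_pow x
  obtain ⟨n, hn, hx⟩ := exists_mem_Wint hlam ⟨hx0, hxy.trans hy1⟩
  obtain ⟨k, hk, hy⟩ := exists_mem_Wint hlam ⟨hx0.trans_le hxy, hy1⟩
  rcases (index_le_of_mem_Wint_of_le hlam hx hy hxy).eq_or_lt with rfl | hkn
  · rw [conjugacyStep_of_mem_Wint hlam hk hx, conjugacyStep_of_mem_Wint hlam hk hy,
      Flam_eq_of_mem_Wint hlam hk hx, Flam_eq_of_mem_Wint hlam hk hy]
    have := invSlope_pos hlam k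
    gcongr
    exact hg (by gcongr)
  calc conjugacyStep lam mu g x ≤ ENNReal.ofReal (mu ^ (n - 1)) :=
        conjugacyStep_le_of_mem_Wint hlam hmu hg hg_pow hn hx
    _ ≤ ENNReal.ofReal (mu ^ k) :=
        ENNReal.ofReal_le_ofReal (pow_le_pow_of_le_one hmu.1.le hmu.2.le (by omega))
    _ ≤ conjugacyStep lam mu g y := by
        rw [conjugacyStep_of_mem_Wint hlam hk hy]; exact le_self_add

end Step

noncomputable def conjugacyLfp (lam mu : ℝ) : ℝ → ℝ≥0∞ :=
  OrderHom.lfp (conjugacyStepHom lam mu)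

lemma conjugacyStep_conjugacyLfp :
    conjugacyStep lam mu (conjugacyLfp lam mu) = conjugacyLfp lam mu :=
  (conjugacyStepHom lam mu).map_lfp

lemma monotone_conjugacyLfp_and_pow_le (hlam : lam ∈ Ioo 0 1) (hmu : mu ∈ Ioo 0 1) :
    Monotone (conjugacyLfp lam mu) ∧
      ∀ j : ℕ, conjugacyLfp lam mu (lam ^ j) ≤ ENNReal.ofReal (mu ^ j) := by
  refine OrderHom.lfp_induction (p := fun g : ℝ → ℝ≥0∞ =>
      Monotone g ∧ ∀ j : ℕ, g (lam ^ j) ≤ ENNReal.ofReal (mu ^ j)) _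
    (fun g ⟨hg, hg_pow⟩ _ => ⟨monotone_conjugacyStep_apply hlam hmu hg hg_pow,
      conjugacyStep_pow_le hlam hmu hg hg_pow⟩) fun s hs => ?_
  simp only [sSup_apply]
  exact ⟨fun x y hxy => iSup_mono fun g => (hs g g.2).1 hxy,
    fun j => iSup_le fun g => (hs g g.2).2 j⟩

lemma conjugacyLfp_ne_top (hlam : lam ∈ Ioo 0 1) (hmu : mu ∈ Ioo 0 1) (x : ℝ) :
    conjugacyLfp lam mu x ≠ ⊤ := by
  obtain ⟨hg, hg_pow⟩ := monotone_conjugacyLfp_and_pow_le hlam hmu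
  rw [← conjugacyStep_conjugacyLfp]
  exact ne_top_of_le_ne_top ENNReal.one_ne_top (conjugacyStep_le_one hlam hmu hg hg_pow x)

noncomputable def conjugacy (lam mu x : ℝ) : ℝ := (conjugacyLfp lam mu x).toReal

lemma monotone_conjugacy (hlam : lam ∈ Ioo 0 1) (hmu : mu ∈ Ioo 0 1) :
    Monotone (conjugacy lam mu) :=
  fun _ _ hxy => ENNReal.toReal_mono (conjugacyLfp_ne_top hlam hmu _)
    ((monotone_conjugacyLfp_and_pow_le hlam hmu).1 hxy)

lemma conjugacy_of_nonpos (hx : x ≤ 0) : conjugacy lam mu x = 0 := by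
  rw [conjugacy, ← conjugacyStep_conjugacyLfp]; simp [conjugacyStep, hx]

lemma conjugacy_of_one_lt (hx : 1 < x) : conjugacy lam mu x = 1 := by
  rw [conjugacy, ← conjugacyStep_conjugacyLfp]
  simp [conjugacyStep, hx, (zero_lt_one.trans hx).not_ge]

lemma conjugacy_pow_le (hlam : lam ∈ Ioo 0 1) (hmu : mu ∈ Ioo 0 1) (j : ℕ) :
    conjugacy lam mu (lam ^ j) ≤ mu ^ j :=
  ENNReal.toReal_le_of_le_ofReal (pow_nonneg hmu.1.le j)
    ((monotone_conjugacyLfp_and_pow_le hlam hmu).2 j)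

lemma conjugacy_affine (hlam : lam ∈ Ioo 0 1) (hmu : mu ∈ Ioo 0 1) (hn : 1 ≤ n)
    (hy : y ∈ Ioc 0 (lam ^ (n - 2))) :
    conjugacy lam mu (invSlope lam n * y + lam ^ n) =
      mu ^ n + invSlope mu n * conjugacy lam mu y := by
  rw [conjugacy, ← conjugacyStep_conjugacyLfp,
    conjugacyStep_of_mem_Wint hlam hn ((affine_mem_Wint_iff hlam hn).2 hy),
    Flam_affine hlam hn hy,
    ENNReal.toReal_add ENNReal.ofReal_ne_top
      (ENNReal.mul_ne_top ENNReal.ofReal_ne_top (conjugacyLfp_ne_top hlam hmu y)),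
    ENNReal.toReal_mul, ENNReal.toReal_ofReal (pow_nonneg hmu.1.le n),
    ENNReal.toReal_ofReal (invSlope_pos hmu n).le, conjugacy]

section RightLim

variable (hlam : lam ∈ Ioo 0 1) (hmu : mu ∈ Ioo 0 1)
include hlam hmu

lemma rightLim_conjugacy_of_neg (hx : x < 0) : Function.rightLim (conjugacy lam mu) x = 0 :=
  tendsto_nhds_unique ((monotone_conjugacy hlam hmu).tendsto_rightLim x) <|
    tendsto_const_nhds.congr' <| by
      filter_upwards [Ioo_mem_nhdsGT hx] with y hy using (conjugacy_of_nonpos hy.2.le).symm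

lemma rightLim_conjugacy_of_one_le (hx : 1 ≤ x) : Function.rightLim (conjugacy lam mu) x = 1 :=
  tendsto_nhds_unique ((monotone_conjugacy hlam hmu).tendsto_rightLim x) <|
    tendsto_const_nhds.congr' <| by
      filter_upwards [self_mem_nhdsWithin] with y (hy : x < y)
      exact (conjugacy_of_one_lt (hx.trans_lt hy)).symm

lemma rightLim_conjugacy_zero : Function.rightLim (conjugacy lam mu) 0 = 0 := by
  have hmono := monotone_conjugacy hlam hmu
  refine le_antisymm ?_ ((conjugacy_of_nonpos le_rfl).symm.trans_le (hmono.le_rightLim le_rfl))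
  refine ge_of_tendsto (tendsto_pow_atTop_nhds_zero_of_lt_one hmu.1.le hmu.2)
    (Eventually.of_forall fun j => ?_)
  exact (hmono.rightLim_le (pow_pos hlam.1 j)).trans (conjugacy_pow_le hlam hmu j)

lemma rightLim_conjugacy_affine_of_mem_Ico (hn : 1 ≤ n) (hy : y ∈ Ico 0 (lam ^ (n - 2))) :
    Function.rightLim (conjugacy lam mu) (invSlope lam n * y + lam ^ n) =
      mu ^ n + invSlope mu n * Function.rightLim (conjugacy lam mu) y := by
  have hmono := monotone_conjugacy hlam hmu
  refine hmono.rightLim_affine_eq_of_eventually hmono (invSlope_pos hlam n) ?_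
  filter_upwards [Ioo_mem_nhdsGT hy.2] with z hz
  exact conjugacy_affine hlam hmu hn ⟨hy.1.trans_lt hz.1, hz.2.le⟩

lemma rightLim_conjugacy_pow (j : ℕ) :
    Function.rightLim (conjugacy lam mu) (lam ^ j) = mu ^ j := by
  rcases j with _ | j
  · simpa using rightLim_conjugacy_of_one_le hlam hmu le_rfl
  · simpa [rightLim_conjugacy_zero hlam hmu] using rightLim_conjugacy_affine_of_mem_Ico hlam hmu
      j.succ_pos ⟨le_rfl, pow_pos hlam.1 _⟩

lemma rightLim_conjugacy_affine (hn : 1 ≤ n) (hy : y ∈ Icc 0 (lam ^ (n - 2))) :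
    Function.rightLim (conjugacy lam mu) (invSlope lam n * y + lam ^ n) =
      mu ^ n + invSlope mu n * Function.rightLim (conjugacy lam mu) y := by
  rcases hy.2.lt_or_eq with hlt | rfl
  · exact rightLim_conjugacy_affine_of_mem_Ico hlam hmu hn ⟨hy.1, hlt⟩
  · rw [invSlope_mul_pow_add_pow hn, rightLim_conjugacy_pow hlam hmu,
      rightLim_conjugacy_pow hlam hmu, add_comm, invSlope_mul_pow_add_pow hn]

end RightLim

lemma Flam_image_eq_preimage (hlam : lam ∈ Ioo 0 1) (hn : 1 ≤ n) {A : Set ℝ}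
    (hA : A ⊆ Wint lam n) :
    Flam lam '' A = (fun y => invSlope lam n * y + lam ^ n) ⁻¹' A := by
  ext y
  constructor
  · rintro ⟨x, hx, rfl⟩
    show invSlope lam n * Flam lam x + lam ^ n ∈ A
    convert hx using 1
    rw [Flam_eq_of_mem_Wint hlam hn (hA hx)]
    field_simp [(invSlope_pos hlam n).ne']
    ring
  · intro hy
    exact ⟨_, hy, Flam_affine hlam hn ((affine_mem_Wint_iff hlam hn).1 (hA hy))⟩

section Measure

variable (hlam : lam ∈ Ioo 0 1) (hmu : mu ∈ Ioo 0 1)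
include hlam hmu

lemma isProbabilityMeasure_conjugacy :
    IsProbabilityMeasure (monotone_conjugacy hlam hmu).stieltjesFunction.measure := by
  refine StieltjesFunction.isProbabilityMeasure _ (tendsto_const_nhds.congr' ?_)
    (tendsto_const_nhds.congr' ?_)
  · filter_upwards [eventually_lt_atBot 0] with x hx
    exact (rightLim_conjugacy_of_neg hlam hmu hx).symm
  · filter_upwards [eventually_ge_atTop 1] with x hx
    exact (rightLim_conjugacy_of_one_le hlam hmu hx).symm

lemma measure_conjugacy_Ioc (k : ℕ) :
    (monotone_conjugacy hlam hmu).stieltjesFunction.measure (Ioc (lam ^ (k + 1)) (lam ^ k)) =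
      ENNReal.ofReal (mu ^ k - mu ^ (k + 1)) := by
  rw [StieltjesFunction.measure_Ioc, Monotone.stieltjesFunction_eq,
    Monotone.stieltjesFunction_eq, rightLim_conjugacy_pow hlam hmu,
    rightLim_conjugacy_pow hlam hmu]

lemma measure_conjugacy_Ioc_zero_one :
    (monotone_conjugacy hlam hmu).stieltjesFunction.measure (Ioc 0 1) = 1 := by
  rw [StieltjesFunction.measure_Ioc, Monotone.stieltjesFunction_eq,
    Monotone.stieltjesFunction_eq, rightLim_conjugacy_of_one_le hlam hmu le_rfl,
    rightLim_conjugacy_zero hlam hmu, sub_zero, ENNReal.ofReal_one]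

lemma measure_conjugacy_Flam_image (hn : 1 ≤ n) {A : Set ℝ} (hA : MeasurableSet A)
    (hAW : A ⊆ Wint lam n) :
    (monotone_conjugacy hlam hmu).stieltjesFunction.measure (Flam lam '' A) =
      ENNReal.ofReal (invSlope mu n)⁻¹ *
        (monotone_conjugacy hlam hmu).stieltjesFunction.measure A := by
  set H := (monotone_conjugacy hlam hmu).stieltjesFunction
  have hr := invSlope_pos hmu n
  have hW : Wint lam n =
      Ioc (invSlope lam n * 0 + lam ^ n) (invSlope lam n * lam ^ (n - 2) + lam ^ n) := by
    rw [invSlope_mul_pow_add_pow hn, mul_zero, zero_add, Wint]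
  rw [H.measure_eq_ofReal_mul_measure_preimage_affine H hr.le (invSlope_pos hlam n)
      (fun y hy => rightLim_conjugacy_affine hlam hmu hn hy) hA (hW ▸ hAW),
    ← Flam_image_eq_preimage hlam hn hAW, ENNReal.ofReal_inv_of_pos hr,
    ENNReal.inv_mul_cancel_left (by simpa using hr) ENNReal.ofReal_ne_top]

end Measure

lemma exp_log_mul_slopeW_rpow (hlam : lam ∈ Ioo 0 1) {t : ℝ} (ht : 0 < t) (n : ℕ) :
    Real.exp (Real.log ((1 - lam) ^ t / (1 - lam ^ t))) * slopeW lam n ^ t =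
      (invSlope (lam ^ t) n)⁻¹ := by
  have h1 : 0 < 1 - lam := sub_pos.2 hlam.2
  have h2 : 0 < 1 - lam ^ t := sub_pos.2 (Real.rpow_lt_one hlam.1.le hlam.2 ht)
  have h3 : 0 < (1 - lam) ^ t := Real.rpow_pos_of_pos h1 t
  rw [Real.exp_log (div_pos h3 h2), slopeW, invSlope]
  split_ifs
  · rw [one_div, Real.inv_rpow h1.le]
    field_simp
  · rw [one_div, Real.inv_rpow (mul_pos hlam.1 h1).le, Real.mul_rpow hlam.1.le h1.le]
    field_simp

end Flam

/-- For `lam ∈ (0,1)`, `t > 0` and `p = log ψ(t)` with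
`ψ(t) = (1-lam)^t/(1-lam^t)`, there is a `(t,p)`-conformal Borel probability measure
on `(0,1]` with `m(W k) = (1-lam^t) * lam^(t(k-1))` for all `k ≥ 1`. -/
theorem stmt4 (lam t : ℝ) (h1 : 0 < lam) (h2 : lam < 1) (ht : 0 < t) :
    ∃ m : Measure ℝ, IsProbabilityMeasure m ∧ m (Set.Ioc 0 1) = 1 ∧
      IsConformal lam t (Real.log ((1-lam)^t / (1 - lam^t))) m ∧
      ∀ k : ℕ, 1 ≤ k → m (Wint lam k) =
        ENNReal.ofReal ((1 - lam^t) * lam ^ (t * ((k:ℝ) - 1))) := by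
  have hlam : lam ∈ Ioo 0 1 := ⟨h1, h2⟩
  have hmu : lam ^ t ∈ Ioo 0 1 := ⟨Real.rpow_pos_of_pos h1 t, Real.rpow_lt_one h1.le h2 ht⟩
  refine ⟨_, Flam.isProbabilityMeasure_conjugacy hlam hmu,
    Flam.measure_conjugacy_Ioc_zero_one hlam hmu, fun n hn A hA hAW => ?_, fun k hk => ?_⟩
  · rw [Flam.exp_log_mul_slopeW_rpow hlam ht]
    exact Flam.measure_conjugacy_Flam_image hlam hmu hn hA hAW
  · obtain ⟨k, rfl⟩ := Nat.exists_eq_add_of_le' hk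
    rw [Wint, Nat.add_sub_cancel, Flam.measure_conjugacy_Ioc hlam hmu k]
    congr 1
    push_cast
    rw [add_sub_cancel_right, Real.rpow_mul h1.le, Real.rpow_natCast]
    ring
end
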